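/- Let α ∈ (1,2) and β ∈ (0,1) with α + β ∈ (2,3), let X be a real Banach space, and let u : ℝ → X be a bounded, twice continuously differentiable function with bounded first and second derivatives such that the Hölder seminorm [D²u]_{α+β−2} := sup_{x≠y} ‖D²u(x) − D²u(y)‖/|x−y|^{α+β−2} is finite. Then for every x ∈ ℝ the Bochner integral (−Δ)^{α/2}u(x) := C_α ∫_ℝ ( u(x) − u(y) − Du(x)·(x−y) ) / |x−y|^{1+α} dy converges absolutely, and there exists a constant C = C(α,β) > 0, independent of X and u, such that sup_x ‖(−Δ)^{α/2}u(x)‖ + sup_{x≠y} ‖(−Δ)^{α/2}u(x) − (−Δ)^{α/2}u(y)‖/|x−y|^β ≤ C ‖u‖_{α+β}, where ‖u‖_{α+β} := sup_x ‖u(x)‖ + sup_x ‖Du(x)‖ + sup_x ‖D²u(x)‖ + [u]_β + [Du]_β + [D²u]_{α+β−2} with [φ]_β := sup_{x≠y} ‖φ(x) − φ(y)‖/|x−y|^β. -/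

import Mathlib

open MeasureTheory

/-- The normalizing constant `C_α = 2^α Γ((1+α)/2) / (π^{1/2} Γ(−α/2))`. -/
noncomputable def Calpha (α : ℝ) : ℝ :=
  2 ^ α * Real.Gamma ((1 + α) / 2) / (Real.sqrt Real.pi * Real.Gamma (-(α / 2)))

/-- Sup norm `sup_x ‖φ(x)‖` of a Banach-space-valued function. -/
noncomputable def supNorm {X : Type*} [NormedAddCommGroup X] (φ : ℝ → X) : ℝ :=
  ⨆ x : ℝ, ‖φ x‖

/-- The `β`-Hölder seminorm `[φ]_β = sup_{x≠y} ‖φ(x) − φ(y)‖ / |x−y|^β`. -/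
noncomputable def holderSemi {X : Type*} [NormedAddCommGroup X] (β : ℝ) (φ : ℝ → X) : ℝ :=
  ⨆ p : {q : ℝ × ℝ // q.1 ≠ q.2}, ‖φ p.val.1 - φ p.val.2‖ / |p.val.1 - p.val.2| ^ β

/-- The fractional Laplacian (pointwise/Bochner form)
`(−Δ)^{α/2}u(x) = C_α ∫_ℝ (u(x) − u(y) − Du(x)·(x−y)) / |x−y|^{1+α} dy`. -/
noncomputable def fracLap (α : ℝ) {X : Type*} [NormedAddCommGroup X] [NormedSpace ℝ X]
    (u : ℝ → X) (x : ℝ) : X :=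
  Calpha α • ∫ y : ℝ, (|x - y| ^ (1 + α))⁻¹ • (u x - u y - (x - y) • deriv u x)

open Set

/-!
After the substitution `y = x + z`, the integrand is, up to sign, `|z|^{-1-α}` times the Taylor
remainder `T_x(z) = u(x+z) - u(x) - z u'(x)`. Near `z = 0`, `‖T_x(z)‖ ≤ ‖u''‖_∞ z²`; far away,
`‖T_x(z)‖ ≤ 2‖u‖_∞ + ‖u'‖_∞ |z|`. Both are integrable against the kernel because `1 < α < 2`,
which bounds `(−Δ)^{α/2}u` uniformly.

For the Hölder bound, put `γ = α + β − 2` and `h = |x − x'|`. When `|z| ≤ h`, the second-order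
expansion with `γ`-Hölder remainder gives `‖T_x(z) − T_{x'}(z)‖ ≲ [u'']_γ h^γ z²`. When `|z| > h`,
the mean value theorem in `x` gives `‖T_x(z) − T_{x'}(z)‖ ≤ [u'']_γ |z|^{1+γ} h`. Integrating both
bounds against the kernel produces `h^{γ+2−α} = h^β`; the far part converges because `β < 1`.
-/

noncomputable def rpowProfile (h A B p q r : ℝ) : ℝ := if r ≤ h then A * r ^ p else B * r ^ q

section rpowProfile

variable {h A B p q : ℝ}

lemma integrableOn_Ioi_rpowProfile (hh : 0 < h) (hp : -1 < p) (hq : q < -1) :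
    IntegrableOn (rpowProfile h A B p q) (Ioi 0) := by
  rw [← Ioc_union_Ioi_eq_Ioi hh.le]
  refine IntegrableOn.union ?_ ?_
  · exact IntegrableOn.congr_fun (((intervalIntegrable_iff_integrableOn_Ioc_of_le hh.le).1
      (intervalIntegral.intervalIntegrable_rpow' hp)).const_mul A)
      (fun r hr => (if_pos hr.2).symm) measurableSet_Ioc
  · exact IntegrableOn.congr_fun ((integrableOn_Ioi_rpow_of_lt hq hh).const_mul B)
      (fun r hr => (if_neg (not_le.2 hr)).symm) measurableSet_Ioi

lemma setIntegral_Ioi_rpowProfile (hh : 0 < h) (hp : -1 < p) (hq : q < -1) :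
    ∫ r in Ioi 0, rpowProfile h A B p q r
      = A * (h ^ (p + 1) / (p + 1)) + B * (h ^ (q + 1) / -(q + 1)) := by
  have hint := integrableOn_Ioi_rpowProfile (A := A) (B := B) hh hp hq
  rw [← Ioc_union_Ioi_eq_Ioi hh.le] at hint ⊢
  rw [setIntegral_union Ioc_disjoint_Ioi_same measurableSet_Ioi
      (hint.mono_set subset_union_left) (hint.mono_set subset_union_right),
    setIntegral_congr_fun (f := rpowProfile h A B p q) (g := fun r => A * r ^ p)
      measurableSet_Ioc (fun r hr => if_pos hr.2),
    setIntegral_congr_fun (f := rpowProfile h A B p q) (g := fun r => B * r ^ q)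
      measurableSet_Ioi (fun r hr => if_neg (not_le.2 hr)),
    integral_const_mul, integral_const_mul, ← intervalIntegral.integral_of_le hh.le,
    integral_rpow (Or.inl hp), integral_Ioi_rpow_of_lt hq hh,
    Real.zero_rpow (by linarith), sub_zero, neg_div, div_neg]

lemma integrable_and_integral_rpowProfile_abs (hh : 0 < h) (hp : -1 < p) (hq : q < -1) :
    Integrable (fun z => rpowProfile h A B p q |z|) ∧
      ∫ z, rpowProfile h A B p q |z|
        = 2 * (A * (h ^ (p + 1) / (p + 1)) + B * (h ^ (q + 1) / -(q + 1))) := by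
  refine ⟨?_, by rw [integral_comp_abs, setIntegral_Ioi_rpowProfile hh hp hq]⟩
  have := (integrable_fun_norm_addHaar volume (E := ℝ) (f := rpowProfile h A B p q)).2
    (by simpa using integrableOn_Ioi_rpowProfile (A := A) (B := B) hh hp hq)
  simpa using this

end rpowProfile

lemma integrable_and_norm_integral_le_of_norm_le_rpowProfile {E : Type*} [NormedAddCommGroup E]
    [NormedSpace ℝ E] {f : ℝ → E} {h A B p q : ℝ} (hh : 0 < h) (hp : -1 < p) (hq : q < -1)
    (hf : AEStronglyMeasurable f) (hbound : ∀ z ≠ 0, ‖f z‖ ≤ rpowProfile h A B p q |z|) :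
    Integrable f ∧
      ‖∫ z, f z‖ ≤ 2 * (A * (h ^ (p + 1) / (p + 1)) + B * (h ^ (q + 1) / -(q + 1))) := by
  obtain ⟨hint, hval⟩ := integrable_and_integral_rpowProfile_abs (A := A) (B := B) hh hp hq
  have hae : ∀ᵐ z, ‖f z‖ ≤ rpowProfile h A B p q |z| := (Measure.ae_ne volume 0).mono hbound
  exact ⟨hint.mono' hf hae, hval ▸ norm_integral_le_of_norm_le hint hae⟩

section Taylor

variable {E : Type*} [NormedAddCommGroup E] [NormedSpace ℝ E] {f f' f'' : ℝ → E}

lemma abs_sub_le_of_mem_uIcc_add {x z w : ℝ} (hw : w ∈ uIcc x (x + z)) : |w - x| ≤ |z| := by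
  simpa only [add_sub_cancel_left] using abs_sub_left_of_mem_uIcc hw

lemma norm_taylor_remainder_le_of_norm_deriv_sub_le (hf : ∀ w, HasDerivAt f (f' w) w)
    {x z K : ℝ} (hK : ∀ w ∈ uIcc x (x + z), ‖f' w - f' x‖ ≤ K) :
    ‖f (x + z) - f x - z • f' x‖ ≤ K * |z| := by
  have hg : ∀ w ∈ uIcc x (x + z), HasDerivWithinAt (fun w => f w - w • f' x) (f' w - f' x)
      (uIcc x (x + z)) w := fun w _ =>
    ((hf w).sub (by simpa using (hasDerivAt_id w).smul_const (f' x))).hasDerivWithinAt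
  have := (convex_uIcc x (x + z)).norm_image_sub_le_of_norm_hasDerivWithin_le hg hK
    left_mem_uIcc right_mem_uIcc
  convert this using 2
  · module
  · simp

lemma norm_taylor_remainder_le_of_norm_deriv2_le (hf : ∀ w, HasDerivAt f (f' w) w)
    (hf' : ∀ w, HasDerivAt f' (f'' w) w) {M : ℝ} (hM : ∀ w, ‖f'' w‖ ≤ M) (x z : ℝ) :
    ‖f (x + z) - f x - z • f' x‖ ≤ M * |z| ^ 2 := by
  have hM0 : 0 ≤ M := (norm_nonneg _).trans (hM 0)
  refine (norm_taylor_remainder_le_of_norm_deriv_sub_le hf (K := M * |z|) fun w hw => ?_).trans_eq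
    (by ring)
  calc ‖f' w - f' x‖ ≤ M * ‖w - x‖ :=
        convex_univ.norm_image_sub_le_of_norm_hasDerivWithin_le
          (fun v _ => (hf' v).hasDerivWithinAt) (fun v _ => hM v) trivial trivial
    _ ≤ M * |z| := by
        gcongr
        exact (Real.norm_eq_abs _).trans_le (abs_sub_le_of_mem_uIcc_add hw)

variable {H γ : ℝ}

lemma norm_taylor_remainder_le_of_holder (hf : ∀ w, HasDerivAt f (f' w) w) (hH0 : 0 ≤ H)
    (hγ : 0 ≤ γ) (hH : ∀ s t, ‖f' s - f' t‖ ≤ H * |s - t| ^ γ) (x z : ℝ) :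
    ‖f (x + z) - f x - z • f' x‖ ≤ H * |z| ^ (γ + 1) := by
  refine (norm_taylor_remainder_le_of_norm_deriv_sub_le hf (K := H * |z| ^ γ)
    fun w hw => (hH w x).trans ?_).trans_eq ?_
  · gcongr H * ?_ ^ γ
    exact abs_sub_le_of_mem_uIcc_add hw
  · rw [Real.rpow_add_one' (abs_nonneg z) (by linarith), mul_assoc]

lemma norm_taylor_remainder_two_le_of_holder (hf : ∀ w, HasDerivAt f (f' w) w)
    (hf' : ∀ w, HasDerivAt f' (f'' w) w) (hH0 : 0 ≤ H) (hγ : 0 ≤ γ)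
    (hH : ∀ s t, ‖f'' s - f'' t‖ ≤ H * |s - t| ^ γ) (x z : ℝ) :
    ‖f (x + z) - f x - z • f' x - (z ^ 2 / 2) • f'' x‖ ≤ H * |z| ^ (γ + 2) := by
  have hF : ∀ w, HasDerivAt (fun w => f w - ((w - x) ^ 2 / 2) • f'' x)
      (f' w - (w - x) • f'' x) w := fun w =>
    (hf w).sub ((((hasDerivAt_id w).sub_const x).pow 2).div_const 2 |>.smul_const (f'' x)
      |>.congr_deriv (by simp))
  have hK : ∀ w ∈ uIcc x (x + z),
      ‖(f' w - (w - x) • f'' x) - (f' x - (x - x) • f'' x)‖ ≤ H * |z| ^ (γ + 1) := fun w hw =>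
    calc _ = ‖f' (x + (w - x)) - f' x - (w - x) • f'' x‖ := by
          rw [add_sub_cancel, sub_self, zero_smul, sub_zero, sub_right_comm]
      _ ≤ H * |w - x| ^ (γ + 1) := norm_taylor_remainder_le_of_holder hf' hH0 hγ hH x (w - x)
      _ ≤ H * |z| ^ (γ + 1) := by
          gcongr H * ?_ ^ (γ + 1)
          exact abs_sub_le_of_mem_uIcc_add hw
  have := norm_taylor_remainder_le_of_norm_deriv_sub_le hF hK
  convert this using 1
  · congr 1
    simp only [add_sub_cancel_left, sub_self, zero_smul, sub_zero]
    module
  · rw [show γ + 2 = γ + 1 + 1 by ring, Real.rpow_add_one' (abs_nonneg z) (by linarith),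
      mul_assoc]

lemma norm_taylor_remainder_sub_le_of_holder (hf : ∀ w, HasDerivAt f (f' w) w)
    (hf' : ∀ w, HasDerivAt f' (f'' w) w) (hH0 : 0 ≤ H) (hγ : 0 ≤ γ)
    (hH : ∀ s t, ‖f'' s - f'' t‖ ≤ H * |s - t| ^ γ) (x y z : ℝ) :
    ‖(f (x + z) - f x - z • f' x) - (f (y + z) - f y - z • f' y)‖
      ≤ H * |z| ^ (γ + 1) * |x - y| := by
  have hg : ∀ w, HasDerivAt (fun w => f (w + z) - f w - z • f' w)
      (f' (w + z) - f' w - z • f'' w) w := fun w =>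
    (((hf (w + z)).comp_add_const w z).sub (hf w)).sub ((hf' w).const_smul z)
  simpa using convex_univ.norm_image_sub_le_of_norm_hasDerivWithin_le
    (fun w _ => (hg w).hasDerivWithinAt)
    (fun w _ => norm_taylor_remainder_le_of_holder hf' hH0 hγ hH w z) (mem_univ y) (mem_univ x)

lemma norm_taylor_remainder_sub_le_of_holder_of_abs_le (hf : ∀ w, HasDerivAt f (f' w) w)
    (hf' : ∀ w, HasDerivAt f' (f'' w) w) (hH0 : 0 ≤ H) (hγ : 0 ≤ γ)
    (hH : ∀ s t, ‖f'' s - f'' t‖ ≤ H * |s - t| ^ γ) {x y z : ℝ} (hz : |z| ≤ |x - y|) :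
    ‖(f (x + z) - f x - z • f' x) - (f (y + z) - f y - z • f' y)‖
      ≤ 5 / 2 * H * |x - y| ^ γ * |z| ^ 2 := by
  have hR : ∀ w, ‖f (w + z) - f w - z • f' w - (z ^ 2 / 2) • f'' w‖
      ≤ H * |x - y| ^ γ * |z| ^ 2 := fun w =>
    calc _ ≤ H * |z| ^ (γ + 2) := norm_taylor_remainder_two_le_of_holder hf hf' hH0 hγ hH w z
      _ = H * |z| ^ γ * |z| ^ 2 := by
        rw [Real.rpow_add' (abs_nonneg z) (by linarith), Real.rpow_two, mul_assoc]
      _ ≤ H * |x - y| ^ γ * |z| ^ 2 := by gcongr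
  have hD : ‖(z ^ 2 / 2) • (f'' x - f'' y)‖ ≤ 1 / 2 * H * |x - y| ^ γ * |z| ^ 2 := by
    rw [norm_smul, Real.norm_eq_abs, abs_div, abs_pow, abs_two]
    calc |z| ^ 2 / 2 * ‖f'' x - f'' y‖ ≤ |z| ^ 2 / 2 * (H * |x - y| ^ γ) := by gcongr; exact hH x y
      _ = 1 / 2 * H * |x - y| ^ γ * |z| ^ 2 := by ring
  calc _ = ‖(f (x + z) - f x - z • f' x - (z ^ 2 / 2) • f'' x)
        - (f (y + z) - f y - z • f' y - (z ^ 2 / 2) • f'' y) + (z ^ 2 / 2) • (f'' x - f'' y)‖ := by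
        congr 1; module
    _ ≤ _ := (norm_add_le _ _).trans (add_le_add (norm_sub_le _ _) le_rfl)
    _ ≤ H * |x - y| ^ γ * |z| ^ 2 + H * |x - y| ^ γ * |z| ^ 2
        + 1 / 2 * H * |x - y| ^ γ * |z| ^ 2 := add_le_add (add_le_add (hR x) (hR y)) hD
    _ = 5 / 2 * H * |x - y| ^ γ * |z| ^ 2 := by ring

end Taylor

section Seminorms

variable {X : Type*} [NormedAddCommGroup X] {φ : ℝ → X} {β C : ℝ}

lemma supNorm_nonneg : 0 ≤ supNorm φ :=
  Real.iSup_nonneg fun _ => norm_nonneg _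

lemma norm_le_supNorm (hφ : ∃ B, ∀ x, ‖φ x‖ ≤ B) (x : ℝ) : ‖φ x‖ ≤ supNorm φ := by
  obtain ⟨B, hB⟩ := hφ
  exact le_ciSup ⟨B, by rintro _ ⟨y, rfl⟩; exact hB y⟩ x

lemma supNorm_le (h : ∀ x, ‖φ x‖ ≤ C) : supNorm φ ≤ C :=
  ciSup_le h

lemma holderSemi_nonneg : 0 ≤ holderSemi β φ :=
  Real.iSup_nonneg fun _ => div_nonneg (norm_nonneg _) (Real.rpow_nonneg (abs_nonneg _) _)

lemma holderSemi_le (h : ∀ x y, x ≠ y → ‖φ x - φ y‖ ≤ C * |x - y| ^ β) :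
    holderSemi β φ ≤ C := by
  have : Nonempty {q : ℝ × ℝ // q.1 ≠ q.2} := ⟨⟨(0, 1), zero_ne_one⟩⟩
  refine ciSup_le fun ⟨⟨x, y⟩, hxy⟩ => ?_
  exact (div_le_iff₀ (Real.rpow_pos_of_pos (abs_pos.2 (sub_ne_zero.2 hxy)) β)).2 (h x y hxy)

lemma norm_sub_le_holderSemi_mul (hφ : ∃ B, ∀ x y, x ≠ y → ‖φ x - φ y‖ ≤ B * |x - y| ^ β)
    (x y : ℝ) : ‖φ x - φ y‖ ≤ holderSemi β φ * |x - y| ^ β := by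
  rcases eq_or_ne x y with rfl | hxy
  · simpa using mul_nonneg holderSemi_nonneg (Real.rpow_nonneg (abs_nonneg (x - x)) β)
  obtain ⟨B, hB⟩ := hφ
  have hpos : 0 < |x - y| ^ β := Real.rpow_pos_of_pos (abs_pos.2 (sub_ne_zero.2 hxy)) β
  refine (div_le_iff₀ hpos).1 (le_ciSup (f := fun p : {q : ℝ × ℝ // q.1 ≠ q.2} =>
    ‖φ p.val.1 - φ p.val.2‖ / |p.val.1 - p.val.2| ^ β) ⟨B, ?_⟩ ⟨(x, y), hxy⟩)
  rintro _ ⟨⟨⟨s, t⟩, hst⟩, rfl⟩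
  exact (div_le_iff₀ (Real.rpow_pos_of_pos (abs_pos.2 (sub_ne_zero.2 hst)) β)).2 (hB s t hst)

end Seminorms

section FracLap

variable {X : Type*} [NormedAddCommGroup X] [NormedSpace ℝ X] {α : ℝ} {u : ℝ → X}

noncomputable def fracLapIntegrand (α : ℝ) (u : ℝ → X) (x z : ℝ) : X :=
  (|z| ^ (1 + α))⁻¹ • (u (x + z) - u x - z • deriv u x)

lemma fracLap_integrand_eq_neg_fracLapIntegrand (x y : ℝ) :
    (|x - y| ^ (1 + α))⁻¹ • (u x - u y - (x - y) • deriv u x)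
      = -fracLapIntegrand α u x (y - x) := by
  rw [fracLapIntegrand, abs_sub_comm, add_sub_cancel, ← smul_neg]
  congr 1
  module

lemma integrable_fracLap_integrand_of_integrable {x : ℝ}
    (h : Integrable (fracLapIntegrand α u x)) :
    Integrable fun y => (|x - y| ^ (1 + α))⁻¹ • (u x - u y - (x - y) • deriv u x) := by
  simp_rw [fracLap_integrand_eq_neg_fracLapIntegrand]
  exact (h.comp_sub_right x).neg

lemma fracLap_eq_neg_smul_integral (x : ℝ) :
    fracLap α u x = -(Calpha α • ∫ z, fracLapIntegrand α u x z) := by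
  rw [fracLap]
  simp_rw [fracLap_integrand_eq_neg_fracLapIntegrand (α := α) (u := u) x]
  rw [integral_neg, integral_sub_right_eq_self (fracLapIntegrand α u x) x, smul_neg]

lemma aestronglyMeasurable_fracLapIntegrand (hu : Continuous u) (x : ℝ) :
    AEStronglyMeasurable (fracLapIntegrand α u x) :=
  (by fun_prop : Measurable fun z : ℝ => (|z| ^ (1 + α))⁻¹).aestronglyMeasurable.smul
    (by fun_prop : Continuous fun z => u (x + z) - u x - z • deriv u x).aestronglyMeasurable

lemma norm_fracLapIntegrand (x z : ℝ) :
    ‖fracLapIntegrand α u x z‖ = (|z| ^ (1 + α))⁻¹ * ‖u (x + z) - u x - z • deriv u x‖ := by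
  rw [fracLapIntegrand, norm_smul, Real.norm_eq_abs, abs_inv, abs_of_nonneg (by positivity)]

lemma abs_rpow_inv_mul_abs_rpow {z : ℝ} (hz : z ≠ 0) (s t : ℝ) :
    (|z| ^ s)⁻¹ * |z| ^ t = |z| ^ (t - s) := by
  rw [inv_mul_eq_div, ← Real.rpow_sub (abs_pos.2 hz)]

lemma norm_fracLapIntegrand_le_rpowProfile (hu : Differentiable ℝ u)
    (hu' : Differentiable ℝ (deriv u)) {M₀ M₁ M₂ : ℝ} (hM₀ : ∀ x, ‖u x‖ ≤ M₀)
    (hM₁ : ∀ x, ‖deriv u x‖ ≤ M₁) (hM₂ : ∀ x, ‖deriv (deriv u) x‖ ≤ M₂) (x : ℝ) {z : ℝ}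
    (hz : z ≠ 0) :
    ‖fracLapIntegrand α u x z‖ ≤ rpowProfile 1 M₂ (2 * M₀ + M₁) (1 - α) (-α) |z| := by
  rw [norm_fracLapIntegrand, rpowProfile]
  split_ifs with hz1
  · calc _ ≤ (|z| ^ (1 + α))⁻¹ * (M₂ * |z| ^ (2 : ℝ)) := by
          rw [Real.rpow_two]
          gcongr
          exact norm_taylor_remainder_le_of_norm_deriv2_le (fun w => (hu w).hasDerivAt)
            (fun w => (hu' w).hasDerivAt) hM₂ x z
      _ = M₂ * |z| ^ (1 - α) := by
          rw [mul_left_comm, abs_rpow_inv_mul_abs_rpow hz]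
          ring_nf
  · have hM₀0 : 0 ≤ M₀ := (norm_nonneg _).trans (hM₀ 0)
    have hT : ‖u (x + z) - u x - z • deriv u x‖ ≤ (2 * M₀ + M₁) * |z| ^ (1 : ℝ) :=
      calc _ ≤ ‖u (x + z)‖ + ‖u x‖ + |z| * ‖deriv u x‖ := by
            refine (norm_sub_le _ _).trans (add_le_add (norm_sub_le _ _) ?_)
            rw [norm_smul, Real.norm_eq_abs]
        _ ≤ M₀ + M₀ + |z| * M₁ := by gcongr <;> apply_assumption
        _ ≤ (2 * M₀ + M₁) * |z| ^ (1 : ℝ) := by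
            rw [Real.rpow_one]
            nlinarith
    calc _ ≤ (|z| ^ (1 + α))⁻¹ * ((2 * M₀ + M₁) * |z| ^ (1 : ℝ)) := by gcongr
      _ = (2 * M₀ + M₁) * |z| ^ (-α) := by
          rw [mul_left_comm, abs_rpow_inv_mul_abs_rpow hz]
          ring_nf

lemma integrable_fracLapIntegrand_and_norm_integral_le (hα : 1 < α) (hα2 : α < 2)
    (hu : Differentiable ℝ u) (hu' : Differentiable ℝ (deriv u)) {M₀ M₁ M₂ : ℝ}
    (hM₀ : ∀ x, ‖u x‖ ≤ M₀) (hM₁ : ∀ x, ‖deriv u x‖ ≤ M₁)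
    (hM₂ : ∀ x, ‖deriv (deriv u) x‖ ≤ M₂) (x : ℝ) :
    Integrable (fracLapIntegrand α u x) ∧
      ‖∫ z, fracLapIntegrand α u x z‖ ≤ 2 * (M₂ / (2 - α) + (2 * M₀ + M₁) / (α - 1)) := by
  obtain ⟨hint, hbound⟩ := integrable_and_norm_integral_le_of_norm_le_rpowProfile one_pos
    (by linarith) (by linarith) (aestronglyMeasurable_fracLapIntegrand hu.continuous x)
    fun z hz => norm_fracLapIntegrand_le_rpowProfile hu hu' hM₀ hM₁ hM₂ x hz
  refine ⟨hint, hbound.trans_eq ?_⟩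
  rw [Real.one_rpow, Real.one_rpow]
  ring

lemma norm_fracLapIntegrand_sub_le_rpowProfile (hu : Differentiable ℝ u)
    (hu' : Differentiable ℝ (deriv u)) {H γ : ℝ} (hH0 : 0 ≤ H) (hγ : 0 ≤ γ)
    (hH : ∀ s t, ‖deriv (deriv u) s - deriv (deriv u) t‖ ≤ H * |s - t| ^ γ) (x x' : ℝ) {z : ℝ}
    (hz : z ≠ 0) :
    ‖fracLapIntegrand α u x z - fracLapIntegrand α u x' z‖
      ≤ rpowProfile |x - x'| (5 / 2 * H * |x - x'| ^ γ) (H * |x - x'|) (1 - α) (γ - α) |z| := by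
  have hf := fun w => (hu w).hasDerivAt
  have hf' := fun w => (hu' w).hasDerivAt
  rw [fracLapIntegrand, fracLapIntegrand, ← smul_sub, norm_smul, Real.norm_eq_abs, abs_inv,
    abs_of_nonneg (by positivity), rpowProfile]
  split_ifs with hzh
  · calc _ ≤ (|z| ^ (1 + α))⁻¹ * (5 / 2 * H * |x - x'| ^ γ * |z| ^ (2 : ℝ)) := by
          rw [Real.rpow_two]
          gcongr
          exact norm_taylor_remainder_sub_le_of_holder_of_abs_le hf hf' hH0 hγ hH hzh
      _ = _ := by
          rw [mul_left_comm, abs_rpow_inv_mul_abs_rpow hz]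
          ring_nf
  · calc _ ≤ (|z| ^ (1 + α))⁻¹ * (H * |x - x'| * |z| ^ (γ + 1)) := by
          gcongr
          exact (norm_taylor_remainder_sub_le_of_holder hf hf' hH0 hγ hH x x' z).trans_eq
            (by ring)
      _ = _ := by
          rw [mul_left_comm, abs_rpow_inv_mul_abs_rpow hz]
          ring_nf

lemma norm_fracLap_le (hα : 1 < α) (hα2 : α < 2) (hu : Differentiable ℝ u)
    (hu' : Differentiable ℝ (deriv u)) {M₀ M₁ M₂ : ℝ} (hM₀ : ∀ x, ‖u x‖ ≤ M₀)
    (hM₁ : ∀ x, ‖deriv u x‖ ≤ M₁) (hM₂ : ∀ x, ‖deriv (deriv u) x‖ ≤ M₂) (x : ℝ) :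
    ‖fracLap α u x‖ ≤ |Calpha α| * (2 * (M₂ / (2 - α) + (2 * M₀ + M₁) / (α - 1))) := by
  rw [fracLap_eq_neg_smul_integral, norm_neg, norm_smul, Real.norm_eq_abs]
  gcongr
  exact (integrable_fracLapIntegrand_and_norm_integral_le hα hα2 hu hu' hM₀ hM₁ hM₂ x).2

lemma norm_fracLap_sub_le (hα2 : α < 2) (hu : Differentiable ℝ u)
    (hu' : Differentiable ℝ (deriv u)) {H γ : ℝ} (hH0 : 0 ≤ H) (hγ : 0 ≤ γ) (hγα : γ < α - 1)
    (hH : ∀ s t, ‖deriv (deriv u) s - deriv (deriv u) t‖ ≤ H * |s - t| ^ γ)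
    (hint : ∀ x, Integrable (fracLapIntegrand α u x)) {x x' : ℝ} (hxx' : x ≠ x') :
    ‖fracLap α u x - fracLap α u x'‖
      ≤ |Calpha α| * (H * (5 / (2 - α) + 2 / (α - 1 - γ))) * |x - x'| ^ (γ + 2 - α) := by
  set h := |x - x'|
  have hh : 0 < h := abs_pos.2 (sub_ne_zero.2 hxx')
  have hbound := (integrable_and_norm_integral_le_of_norm_le_rpowProfile hh
    (by linarith : -1 < 1 - α) (by linarith : γ - α < -1)
    ((aestronglyMeasurable_fracLapIntegrand hu.continuous x).sub
      (aestronglyMeasurable_fracLapIntegrand hu.continuous x'))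
    fun z hz => norm_fracLapIntegrand_sub_le_rpowProfile hu hu' hH0 hγ hH x x' hz).2
  have e₁ : h ^ γ * h ^ (1 - α + 1) = h ^ (γ + 2 - α) := by
    rw [← Real.rpow_add hh]; ring_nf
  have e₂ : h * h ^ (γ - α + 1) = h ^ (γ + 2 - α) := by
    rw [mul_comm, ← Real.rpow_add_one hh.ne']; ring_nf
  rw [fracLap_eq_neg_smul_integral, fracLap_eq_neg_smul_integral, neg_sub_neg, norm_sub_rev,
    ← smul_sub, ← integral_sub (hint x) (hint x'), norm_smul, Real.norm_eq_abs, mul_assoc]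
  gcongr
  refine hbound.trans_eq ?_
  linear_combination (5 * H / (2 - α)) * e₁ + (2 * H / (α - 1 - γ)) * e₂

lemma supNorm_fracLap_le (hα : 1 < α) (hα2 : α < 2) (hu : Differentiable ℝ u)
    (hu' : Differentiable ℝ (deriv u)) (hu₀ : ∃ B, ∀ x, ‖u x‖ ≤ B)
    (hu₁ : ∃ B, ∀ x, ‖deriv u x‖ ≤ B) (hu₂ : ∃ B, ∀ x, ‖deriv (deriv u) x‖ ≤ B) :
    supNorm (fracLap α u) ≤ |Calpha α| * (2 * (supNorm (deriv (deriv u)) / (2 - α)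
      + (2 * supNorm u + supNorm (deriv u)) / (α - 1))) :=
  supNorm_le (norm_fracLap_le hα hα2 hu hu'
    (norm_le_supNorm hu₀) (norm_le_supNorm hu₁) (norm_le_supNorm hu₂))

lemma holderSemi_fracLap_le {β : ℝ} (hα2 : α < 2) (hβ1 : β < 1) (hab : 2 < α + β)
    (hu : Differentiable ℝ u) (hu' : Differentiable ℝ (deriv u))
    (hu₂ : ∃ B, ∀ x y, x ≠ y →
      ‖deriv (deriv u) x - deriv (deriv u) y‖ ≤ B * |x - y| ^ (α + β - 2))
    (hint : ∀ x, Integrable (fracLapIntegrand α u x)) :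
    holderSemi β (fracLap α u) ≤ |Calpha α| *
      (holderSemi (α + β - 2) (deriv (deriv u)) * (5 / (2 - α) + 2 / (1 - β))) :=
  holderSemi_le fun _ _ hxx' => (norm_fracLap_sub_le hα2 hu hu' holderSemi_nonneg
    (by linarith) (by linarith) (norm_sub_le_holderSemi_mul hu₂) hint hxx').trans_eq
    (by rw [show α - 1 - (α + β - 2) = 1 - β by ring, show α + β - 2 + 2 - α = β by ring])

end FracLap

theorem fracLap_holder_bound_general (α β : ℝ) (hα : 1 < α) (hα2 : α < 2)
    (hβ1 : β < 1) (hab : 2 < α + β) :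
    ∃ C : ℝ, 0 < C ∧
      ∀ (X : Type) [NormedAddCommGroup X] [NormedSpace ℝ X] [CompleteSpace X],
        ∀ u : ℝ → X,
          (∃ B : ℝ, ∀ x : ℝ, ‖u x‖ ≤ B) →
          ContDiff ℝ 2 u →
          (∃ B : ℝ, ∀ x : ℝ, ‖deriv u x‖ ≤ B) →
          (∃ B : ℝ, ∀ x : ℝ, ‖iteratedDeriv 2 u x‖ ≤ B) →
          (∃ B : ℝ, ∀ x y : ℝ, x ≠ y →
            ‖iteratedDeriv 2 u x - iteratedDeriv 2 u y‖ ≤ B * |x - y| ^ (α + β - 2)) →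
          (∀ x : ℝ, Integrable
              (fun y : ℝ => (|x - y| ^ (1 + α))⁻¹ • (u x - u y - (x - y) • deriv u x))) ∧
          supNorm (fracLap α u) + holderSemi β (fracLap α u) ≤
            C * (supNorm u + supNorm (deriv u) + supNorm (iteratedDeriv 2 u)
              + holderSemi β u + holderSemi β (deriv u)
              + holderSemi (α + β - 2) (iteratedDeriv 2 u)) := by
  refine ⟨|Calpha α| * (7 / (2 - α) + 6 / (α - 1) + 2 / (1 - β)) + 1,
    add_pos_of_nonneg_of_pos (mul_nonneg (abs_nonneg _) (by bound)) one_pos,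
    fun X _ _ _ u hu₀ hu hu₁ hu₂ hu₃ => ?_⟩
  rw [show iteratedDeriv 2 u = deriv (deriv u) by simp [iteratedDeriv_eq_iterate]] at *
  have hd₁ : Differentiable ℝ u := hu.differentiable (by norm_num)
  have hd₂ : Differentiable ℝ (deriv u) := by
    simpa using hu.differentiable_iteratedDeriv 1 (by norm_num)
  have hint x := (integrable_fracLapIntegrand_and_norm_integral_le hα hα2 hd₁ hd₂
    (norm_le_supNorm hu₀) (norm_le_supNorm hu₁) (norm_le_supNorm hu₂) x).1
  refine ⟨fun x => integrable_fracLap_integrand_of_integrable (hint x), ?_⟩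
  obtain ⟨hM₀, hM₁, hM₂, hS₀, hS₁, hH⟩ : 0 ≤ supNorm u ∧ 0 ≤ supNorm (deriv u) ∧
      0 ≤ supNorm (deriv (deriv u)) ∧ 0 ≤ holderSemi β u ∧ 0 ≤ holderSemi β (deriv u) ∧
      0 ≤ holderSemi (α + β - 2) (deriv (deriv u)) :=
    ⟨supNorm_nonneg, supNorm_nonneg, supNorm_nonneg, holderSemi_nonneg, holderSemi_nonneg,
      holderSemi_nonneg⟩
  set N := supNorm u + supNorm (deriv u) + supNorm (deriv (deriv u)) + holderSemi β u
    + holderSemi β (deriv u) + holderSemi (α + β - 2) (deriv (deriv u))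
  calc _ ≤ _ := add_le_add (supNorm_fracLap_le hα hα2 hd₁ hd₂ hu₀ hu₁ hu₂)
        (holderSemi_fracLap_le hα2 hβ1 hab hd₁ hd₂ hu₃ hint)
    _ ≤ |Calpha α| * (2 * (N / (2 - α) + (2 * N + N) / (α - 1)))
        + |Calpha α| * (N * (5 / (2 - α) + 2 / (1 - β))) := by
      gcongr <;> linarith
    _ = |Calpha α| * (7 / (2 - α) + 6 / (α - 1) + 2 / (1 - β)) * N := by ring
    _ ≤ _ := by rw [add_mul, one_mul]; linarith

/-- Hölder boundedness of the fractional Laplacian: for `α ∈ (1,2)`, `β ∈ (0,1)` with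
`α + β ∈ (2,3)`, there is `C = C(α,β) > 0`, independent of the Banach space `X`
and of `u`, such that for every bounded `C²` function `u : ℝ → X` with bounded
derivatives and finite seminorm `[D²u]_{α+β−2}`, the defining Bochner integral of
`(−Δ)^{α/2}u(x)` converges absolutely for every `x`, and
`‖(−Δ)^{α/2}u‖_∞ + [(−Δ)^{α/2}u]_β ≤ C ‖u‖_{α+β}`. -/
theorem fracLap_holder_bound (α β : ℝ) (hα : 1 < α) (hα2 : α < 2)
    (hβ : 0 < β) (hβ1 : β < 1) (hab : 2 < α + β) (hab2 : α + β < 3) :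
    ∃ C : ℝ, 0 < C ∧
      ∀ (X : Type) [NormedAddCommGroup X] [NormedSpace ℝ X] [CompleteSpace X],
        ∀ u : ℝ → X,
          (∃ B : ℝ, ∀ x : ℝ, ‖u x‖ ≤ B) →
          ContDiff ℝ 2 u →
          (∃ B : ℝ, ∀ x : ℝ, ‖deriv u x‖ ≤ B) →
          (∃ B : ℝ, ∀ x : ℝ, ‖iteratedDeriv 2 u x‖ ≤ B) →
          (∃ B : ℝ, ∀ x y : ℝ, x ≠ y →
            ‖iteratedDeriv 2 u x - iteratedDeriv 2 u y‖ ≤ B * |x - y| ^ (α + β - 2)) →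
          (∀ x : ℝ, Integrable
              (fun y : ℝ => (|x - y| ^ (1 + α))⁻¹ • (u x - u y - (x - y) • deriv u x))) ∧
          supNorm (fracLap α u) + holderSemi β (fracLap α u) ≤
            C * (supNorm u + supNorm (deriv u) + supNorm (iteratedDeriv 2 u)
              + holderSemi β u + holderSemi β (deriv u)
              + holderSemi (α + β - 2) (iteratedDeriv 2 u)) :=
  fracLap_holder_bound_general α β hα hα2 hβ1 hab
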